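/- arXiv:1809.10046 — 6 statements merged into one kernel-verified Lean document; each statement's English description precedes it below -/
import Mathlib

section
/- Let $X$ be the sum of $n \geq 2$ independent Bernoulli random variables each with success probability $1/2$. Then the probability that $0 < X < (3/4)n$ is strictly greater than $1/12$. -/
open MeasureTheory ProbabilityTheory ENNReal

/-! Since `𝔼[X] = n/2`, Markov's inequality gives `Pr[X ≥ 3n/4] ≤ 2/3`, and independence gives
`Pr[X = 0] = 2⁻ⁿ`. For `n ≥ 3` the union bound leaves at least `1 - 2/3 - 1/8 > 1/12` for the event
`0 < X < 3n/4`. For `n = 2` this bound is exactly `1/12`, so there we use instead that the outcome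
`(Y₀, Y₁) = (1, 0)` alone has probability `1/4`. -/

section

variable {Ω : Type*} [MeasurableSpace Ω] {μ : Measure Ω}

lemma ae_eq_zero_or_eq_one [IsProbabilityMeasure μ] {f : Ω → ℝ} (hf : Measurable f)
    (h : μ {ω | f ω = 0} + μ {ω | f ω = 1} = 1) : ∀ᵐ ω ∂μ, f ω = 0 ∨ f ω = 1 := by
  have hdisj : Disjoint {ω | f ω = 0} {ω | f ω = 1} :=
    Set.disjoint_left.2 fun _ h0 h1 => zero_ne_one (h0.symm.trans h1)
  have hunion : μ ({ω | f ω = 0} ∪ {ω | f ω = 1}) = 1 := by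
    rwa [measure_union hdisj (hf (measurableSet_singleton 1))]
  exact mem_ae_iff.2 ((prob_compl_eq_zero_iff
    ((hf (measurableSet_singleton 0)).union (hf (measurableSet_singleton 1)))).2 hunion)

lemma ae_eq_indicator_of_ae_eq_zero_or_eq_one {f : Ω → ℝ}
    (h : ∀ᵐ ω ∂μ, f ω = 0 ∨ f ω = 1) : f =ᵐ[μ] {ω | f ω = 1}.indicator 1 := by
  filter_upwards [h] with ω hω
  rcases hω with h0 | h1
  · simp [h0]
  · simp [h1]

lemma integrable_of_ae_eq_zero_or_eq_one [IsFiniteMeasure μ] {f : Ω → ℝ} (hf : Measurable f)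
    (h : ∀ᵐ ω ∂μ, f ω = 0 ∨ f ω = 1) : Integrable f μ :=
  ((integrable_const 1).indicator (hf (measurableSet_singleton 1))).congr
    (ae_eq_indicator_of_ae_eq_zero_or_eq_one h).symm

lemma integral_eq_measureReal_of_ae_eq_zero_or_eq_one {f : Ω → ℝ} (hf : Measurable f)
    (h : ∀ᵐ ω ∂μ, f ω = 0 ∨ f ω = 1) : ∫ ω, f ω ∂μ = μ.real {ω | f ω = 1} :=
  (integral_congr_ae (ae_eq_indicator_of_ae_eq_zero_or_eq_one h)).trans
    (integral_indicator_one (hf (measurableSet_singleton 1)))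

variable {ι : Type*} [Fintype ι] {Y : ι → Ω → ℝ}

lemma mul_measureReal_sum_ge_le_sum_measureReal [IsFiniteMeasure μ]
    (hY : ∀ i, Measurable (Y i)) (h01 : ∀ i, ∀ᵐ ω ∂μ, Y i ω = 0 ∨ Y i ω = 1) (c : ℝ) :
    c * μ.real {ω | c ≤ ∑ i, Y i ω} ≤ ∑ i, μ.real {ω | Y i ω = 1} := by
  have hint i : Integrable (Y i) μ := integrable_of_ae_eq_zero_or_eq_one (hY i) (h01 i)
  have hnonneg : 0 ≤ᵐ[μ] fun ω => ∑ i, Y i ω := by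
    filter_upwards [ae_all_iff.2 h01] with ω hω
    exact Finset.sum_nonneg fun i _ => by rcases hω i with h | h <;> simp [h]
  calc c * μ.real {ω | c ≤ ∑ i, Y i ω}
      ≤ ∫ ω, ∑ i, Y i ω ∂μ :=
        mul_meas_ge_le_integral_of_nonneg hnonneg (integrable_finsetSum _ fun i _ => hint i) c
    _ = ∑ i, μ.real {ω | Y i ω = 1} := by
        rw [integral_finsetSum _ fun i _ => hint i]
        exact Finset.sum_congr rfl fun i _ =>
          integral_eq_measureReal_of_ae_eq_zero_or_eq_one (hY i) (h01 i)

lemma measure_sum_nonpos_le_prod (h01 : ∀ i, ∀ᵐ ω ∂μ, Y i ω = 0 ∨ Y i ω = 1)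
    (hindep : iIndepFun Y μ) :
    μ {ω | ∑ i, Y i ω ≤ 0} ≤ ∏ i, μ {ω | Y i ω = 0} := by
  refine (measure_mono_ae ?_).trans_eq
    (hindep.meas_iInter fun i => ⟨{0}, measurableSet_singleton 0, rfl⟩)
  filter_upwards [ae_all_iff.2 h01] with ω hω hsum
  have hnonneg : ∀ i ∈ Finset.univ, 0 ≤ Y i ω := fun i _ => by
    rcases hω i with h | h <;> simp [h]
  exact Set.mem_iInter.2 fun i => (Finset.sum_eq_zero_iff_of_nonneg hnonneg).1
    (le_antisymm hsum (Finset.sum_nonneg hnonneg)) i (Finset.mem_univ i)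

end

lemma one_sub_sub_le_measureReal_lt_and_lt {Ω : Type*} [MeasurableSpace Ω] (μ : Measure Ω)
    [IsProbabilityMeasure μ] (X : Ω → ℝ) (a b : ℝ) :
    1 - μ.real {ω | X ω ≤ a} - μ.real {ω | b ≤ X ω} ≤ μ.real {ω | a < X ω ∧ X ω < b} := by
  have hcover : Set.univ ⊆ {ω | a < X ω ∧ X ω < b} ∪ {ω | X ω ≤ a} ∪ {ω | b ≤ X ω} := by
    intro ω _
    by_cases ha : X ω ≤ a
    · exact Or.inl (Or.inr ha)
    by_cases hb : b ≤ X ω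
    · exact Or.inr hb
    exact Or.inl (Or.inl ⟨not_le.1 ha, not_le.1 hb⟩)
  have hunion := (measureReal_mono (μ := μ) hcover).trans ((measureReal_union_le _ _).trans
    (add_le_add_left (measureReal_union_le _ _) _))
  rw [probReal_univ] at hunion
  linarith

/-- The sum `X` of `n ≥ 2` independent Bernoulli(1/2) random variables
satisfies `Pr[0 < X < (3/4)n] > 1/12`. -/
theorem knockback_productive_round {Ω : Type*} [MeasurableSpace Ω]
    (μ : Measure Ω) [IsProbabilityMeasure μ]
    (n : ℕ) (hn : 2 ≤ n) (Y : Fin n → Ω → ℝ)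
    (hmeas : ∀ i, Measurable (Y i))
    (hindep : iIndepFun Y μ)
    (hbern : ∀ i, μ {ω | Y i ω = 1} = 1/2 ∧ μ {ω | Y i ω = 0} = 1/2) :
    (1 : ℝ≥0∞)/12 < μ {ω | 0 < ∑ i, Y i ω ∧ ∑ i, Y i ω < (3/4) * n} := by
  rw [← ENNReal.toReal_lt_toReal (by norm_num) (measure_ne_top _ _), ← measureReal_def]
  norm_num
  rcases hn.eq_or_lt with rfl | hn3
  · have hpattern : μ ({ω | Y 0 ω = 1} ∩ {ω | Y 1 ω = 0}) =
        μ {ω | Y 0 ω = 1} * μ {ω | Y 1 ω = 0} :=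
      (hindep.indepFun zero_ne_one).measure_inter_preimage_eq_mul _ _
        (measurableSet_singleton 1) (measurableSet_singleton 0)
    calc (1 : ℝ)/12 < 1/4 := by norm_num
      _ = μ.real ({ω | Y 0 ω = 1} ∩ {ω | Y 1 ω = 0}) := by
        rw [measureReal_def, hpattern, (hbern 0).1, (hbern 1).2]
        norm_num
      _ ≤ _ := measureReal_mono fun ω ⟨h0, h1⟩ => by
        simp only [Set.mem_ofPred_eq, Fin.sum_univ_two] at h0 h1 ⊢
        norm_num [h0, h1]
  have h01 i : ∀ᵐ ω ∂μ, Y i ω = 0 ∨ Y i ω = 1 :=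
    ae_eq_zero_or_eq_one (hmeas i) (by rw [(hbern i).2, (hbern i).1, ENNReal.add_halves])
  have hhalf i : μ.real {ω | Y i ω = 1} = 1/2 := by simp [measureReal_def, (hbern i).1]
  have hhigh : μ.real {ω | 3/4 * n ≤ ∑ i, Y i ω} ≤ 2/3 := by
    have hmarkov := mul_measureReal_sum_ge_le_sum_measureReal hmeas h01 (3/4 * n)
    simp only [hhalf, Finset.sum_const, Finset.card_univ, Fintype.card_fin,
      nsmul_eq_mul] at hmarkov
    have hn0 : (0 : ℝ) < n := by positivity
    nlinarith
  have hzero : μ.real {ω | ∑ i, Y i ω ≤ 0} ≤ 1/8 := by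
    have hprod := measure_sum_nonpos_le_prod h01 hindep
    simp only [(hbern _).2, Finset.prod_const, Finset.card_univ, Fintype.card_fin] at hprod
    calc μ.real _ ≤ ((1/2 : ℝ≥0∞)^n).toReal := ENNReal.toReal_mono (by simp) hprod
      _ = (1/2 : ℝ)^n := by simp
      _ ≤ (1/2)^3 := pow_le_pow_of_le_one (by norm_num) (by norm_num) hn3
      _ = 1/8 := by norm_num
  have hmid := one_sub_sub_le_measureReal_lt_and_lt μ (fun ω => ∑ i, Y i ω) 0 (3/4 * n)
  linarith
end

section
/- Consider $n \geq 2$ agents each holding a potential value; in each round every agent with potential $\geq 1/2$ either 'sends' or not, and the net potential change of each agent in a round is: $+1$ if it sends and receives no signal, $+1/2$ if it neither sends nor receives, $-1/2$ if it sends and receives, $-1$ if it receives but does not send (where an agent 'receives' iff some other agent sends). If all agents start at potential $0$ and an agent becomes leader when its potential first reaches $2$, then no two agents ever become leader in the same round; in fact at most one agent ever becomes leader. -/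
/-- Safety of single-hop KnockBack leader election.
`C r i` is the potential of agent `i` at the start of round `r`, `sends r i`
records whether `i` sends in round `r`.  Agents may send only at potential
`≥ 1/2` and must send at potential `≥ 1`; net potential updates follow the
net potential table (receiving means some *other* agent sends).  All agents
start at potential `0`; an agent is a leader once its potential reaches `2`.
Then at most one agent ever becomes leader (in particular no two agents
become leader in the same round). -/
theorem knockback_safety (n : ℕ) (C : ℕ → Fin n → ℝ) (sends : ℕ → Fin n → Bool)
    (hinit : ∀ i, C 0 i = 0)
    (hsend_lb : ∀ r i, sends r i = true → 1/2 ≤ C r i)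
    (hsend_forced : ∀ r i, 1 ≤ C r i → sends r i = true)
    (hupdate : ∀ r i,
      C (r+1) i = C r i +
        (if sends r i = true then
          (if ∃ j, j ≠ i ∧ sends r j = true then -(1/2) else 1)
         else
          (if ∃ j, j ≠ i ∧ sends r j = true then -1 else 1/2))) :
    (∀ r i j, 2 ≤ C r i → 2 ≤ C r j → i = j) ∧
    (∀ r r' i j, 2 ≤ C r i → 2 ≤ C r' j → i = j) := by
  have key : ∀ r i, 2 ≤ C r i → ∀ r' j, 2 ≤ C r' j → i = j := by
    intro r1 i1 h1 r2 j2 h2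
    have hex : ∃ r, ∃ k : Fin n, 2 ≤ C r k := ⟨r1, i1, h1⟩
    obtain ⟨i, hi⟩ := Nat.find_spec hex
    set r := Nat.find hex with hrdef
    have hmin : ∀ s, s < r → ∀ k : Fin n, C s k < 2 := by
      intro s hs k
      by_contra h
      push_neg at h
      exact Nat.find_min hex hs ⟨k, h⟩
    have hr1 : r ≠ 0 := by
      intro h
      rw [h] at hi
      rw [hinit i] at hi
      norm_num at hi
    obtain ⟨p, hp⟩ : ∃ p, r = p + 1 := ⟨r - 1, (Nat.succ_pred_eq_of_pos (Nat.pos_of_ne_zero hr1)).symm⟩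
    -- i sends in round p
    have hsendi : sends p i = true := by
      by_contra h
      have hlt : C p i < 1 := by
        by_contra h'
        push_neg at h'
        exact h (hsend_forced p i h')
      have hu := hupdate p i
      rw [hp] at hi
      by_cases hrecv : ∃ j, j ≠ i ∧ sends p j = true <;>
        simp [h, hrecv] at hu <;> linarith
    -- no other agent sends in round p
    have hnone : ¬ ∃ j, j ≠ i ∧ sends p j = true := by
      intro hrecv
      have hu := hupdate p i
      simp [hsendi, hrecv] at hu
      have hlt : C p i < 2 := hmin p (by omega) i
      rw [hp] at hi
      linarith
    -- every other agent is < 0 at round r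
    have hothers : ∀ j : Fin n, j ≠ i → C r j < 0 := by
      intro j hj
      have hjs : sends p j = false := by
        by_contra h
        exact hnone ⟨j, hj, by simpa using h⟩
      have hjlt : C p j < 1 := by
        by_contra h'
        push_neg at h'
        have := hsend_forced p j h'
        rw [hjs] at this
        exact absurd this (by simp)
      have hu := hupdate p j
      have hrecv : ∃ k, k ≠ j ∧ sends p k = true := ⟨i, fun h => hj h.symm, hsendi⟩
      simp [hjs, hrecv] at hu
      rw [hp]
      linarith
    -- invariant for all s ≥ r
    have hinv : ∀ s, r ≤ s → (2 ≤ C s i ∧ ∀ j : Fin n, j ≠ i → C s j < 0) := by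
      intro s hs
      induction s with
      | zero => exact absurd (Nat.le_zero.mp hs) hr1
      | succ t ih =>
        rcases Nat.lt_or_ge r (t + 1) with hlt | hge
        · have ht : r ≤ t := by omega
          obtain ⟨hCi, hCj⟩ := ih ht
          have hjs : ∀ j : Fin n, j ≠ i → sends t j = false := by
            intro j hj
            by_contra h
            have h' : sends t j = true := by simpa using h
            have := hsend_lb t j h'
            have := hCj j hj
            linarith
          have hsi : sends t i = true := hsend_forced t i (by linarith)
          have hnr : ¬ ∃ j, j ≠ i ∧ sends t j = true := by
            rintro ⟨j, hj, hjsend⟩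
            rw [hjs j hj] at hjsend
            exact absurd hjsend (by simp)
          constructor
          · have hu := hupdate t i
            simp [hsi, hnr] at hu
            linarith
          · intro j hj
            have hu := hupdate t j
            have hrecv : ∃ k, k ≠ j ∧ sends t k = true := ⟨i, fun h => hj h.symm, hsi⟩
            simp [hjs j hj, hrecv] at hu
            have := hCj j hj
            linarith
        · have : t + 1 = r := by omega
          rw [this]
          exact ⟨hi, hothers⟩
    -- conclude
    have huniq : ∀ s, ∀ k : Fin n, 2 ≤ C s k → k = i := by
      intro s k hk
      rcases Nat.lt_or_ge s r with hlt | hge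
      · exact absurd hk (not_le.mpr (hmin s hlt k))
      · by_contra h
        have := (hinv s hge).2 k h
        linarith
    rw [huniq r1 i1 h1, huniq r2 j2 h2]
  exact ⟨fun r i j hi hj => key r i hi r j hj,
         fun r r' i j hi hj => key r i hi r' j hj⟩
end

section
/- In the single-hop KnockBack system, if an agent $c$ starts a round with potential strictly less than the current maximum potential $\hat{p}(r)$ over all agents (all potentials being multiples of $1/2$, updates given by the net potential table, and agents with potential in $[1/2,1)$ send with probability $1/2$, those with potential $\geq 1$ send with probability $1$, those below $1/2$ never send, and the maximum is driven toward equilibrium $2$ with gradient $1/2$), then in every subsequent round $c$'s potential remains strictly less than the maximum. Equivalently: the set $B(r)$ of non-maximal agents is absorbing. -/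
/-- The set `B(r)` of non-maximal agents is absorbing in the
single-hop KnockBack system: if agent `c`'s potential is strictly below the
maximum potential at round `r` (i.e. strictly below some agent's potential),
then it remains strictly below the maximum in round `r+1`.  Dynamics: agents
send only at potential `≥ 1/2`, must send at potential `≥ 1`, all start at
potential `0` (so potentials are multiples of `1/2`), and updates follow the
net potential table. -/
theorem knockback_B_absorbing (n : ℕ) (C : ℕ → Fin n → ℝ)
    (sends : ℕ → Fin n → Bool)
    (hinit : ∀ i, C 0 i = 0)
    (hsend_lb : ∀ r i, sends r i = true → 1/2 ≤ C r i)
    (hsend_forced : ∀ r i, 1 ≤ C r i → sends r i = true)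
    (hupdate : ∀ r i,
      C (r+1) i = C r i +
        (if sends r i = true then
          (if ∃ j, j ≠ i ∧ sends r j = true then -(1/2) else 1)
         else
          (if ∃ j, j ≠ i ∧ sends r j = true then -1 else 1/2))) :
    ∀ r (c : Fin n), (∃ d, C r c < C r d) → ∃ d, C (r+1) c < C (r+1) d := by
  -- half-integrality
  have half : ∀ r i, ∃ k : ℤ, C r i = k / 2 := by
    intro r
    induction r with
    | zero => intro i; exact ⟨0, by simp [hinit i]⟩
    | succ r ih =>
      intro i
      obtain ⟨k, hk⟩ := ih i
      rw [hupdate r i]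
      by_cases h1 : sends r i = true <;> by_cases h2 : ∃ j, j ≠ i ∧ sends r j = true
      · exact ⟨k - 1, by rw [hk]; simp [h1, h2]; push_cast; ring⟩
      · exact ⟨k + 2, by rw [hk]; simp [h1, h2]; push_cast; ring⟩
      · exact ⟨k - 2, by rw [hk]; simp [h1, h2]; push_cast; ring⟩
      · exact ⟨k + 1, by rw [hk]; simp [h1, h2]; push_cast; ring⟩
  intro r c ⟨d0, hd0⟩
  have : Nonempty (Fin n) := ⟨c⟩
  obtain ⟨d, hd⟩ := Finite.exists_max (C r)
  have hcd : C r c < C r d := lt_of_lt_of_le hd0 (hd d0)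
  have hne : c ≠ d := by rintro rfl; exact lt_irrefl _ hcd
  refine ⟨d, ?_⟩
  have gap : 1/2 ≤ C r d - C r c := by
    obtain ⟨kc, hkc⟩ := half r c
    obtain ⟨kd, hkd⟩ := half r d
    have : (kc : ℝ) < kd := by
      have := hcd; rw [hkc, hkd] at this
      exact_mod_cast (div_lt_div_iff_of_pos_right (by norm_num)).mp this
    have : (kc : ℤ) + 1 ≤ kd := by exact_mod_cast Int.lt_iff_add_one_le.mp (by exact_mod_cast this)
    rw [hkc, hkd]
    have : (kc : ℝ) + 1 ≤ kd := by exact_mod_cast this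
    linarith
  rw [hupdate r c, hupdate r d]
  by_cases hc : sends r c = true
  · -- c sends, so C r c ≥ 1/2, hence C r d ≥ 1, so d sends; both get -1/2
    have h1 : 1 ≤ C r d := by have := hsend_lb r c hc; linarith
    have hdsend : sends r d = true := hsend_forced r d h1
    have e1 : ∃ j, j ≠ c ∧ sends r j = true := ⟨d, hne.symm, hdsend⟩
    have e2 : ∃ j, j ≠ d ∧ sends r j = true := ⟨c, hne, hc⟩
    simp only [hc, hdsend, if_pos e1, if_pos e2, if_true]
    linarith
  · by_cases hex : ∃ j, j ≠ c ∧ sends r j = true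
    · -- c gets -1; d gets at least -1
      rw [if_neg hc, if_pos hex]
      have : C r d - 1 ≤ C r d + (if sends r d = true then
          (if ∃ j, j ≠ d ∧ sends r j = true then -(1/2 : ℝ) else 1)
         else (if ∃ j, j ≠ d ∧ sends r j = true then -1 else 1/2)) := by
        by_cases h1 : sends r d = true <;> by_cases h2 : ∃ j, j ≠ d ∧ sends r j = true <;>
          simp [h1, h2] <;> linarith
      linarith
    · -- nobody sends
      have hdns : sends r d ≠ true := by
        intro h; exact hex ⟨d, hne.symm, h⟩
      have hex2 : ¬ ∃ j, j ≠ d ∧ sends r j = true := by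
        rintro ⟨j, hj, hjs⟩
        by_cases hjc : j = c
        · exact hc (hjc ▸ hjs)
        · exact hex ⟨j, hjc, hjs⟩
      rw [if_neg hc, if_neg hex, if_neg hdns, if_neg hex2]
      linarith
end

section
/- Fix an integer binding bound $b \geq 1$. Consider deterministic identical agents in a fully connected network of size $n$ whose per-round update depends only on their own state and on $\min(b, m)$ where $m$ is the number of signals received. If all agents start in the same state, then for any two network sizes $n_1, n_2$ with $n_1 - 1 > b$ and $n_2 - 1 > b$, the (common) state of the agents after $T$ rounds is the same in the $n_1$-agent system as in the $n_2$-agent system, for every $T$. -/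
/-- Indistinguishability with binding bound `b`: deterministic
identical agents in a fully connected network update their state by a function
`F` of their own state and `min b m`, where `m` is the number of other agents
currently signalling (signalling is a function of state).  If all agents start
in the common state `s0`, then two systems of sizes `n₁, n₂` with
`n₁ - 1 > b` and `n₂ - 1 > b` have identical (common) agent state after every
number `T` of rounds. -/
theorem binding_bound_indistinguishable {S : Type*}
    (b : ℕ) (hb : 1 ≤ b)
    (sendsP : S → Bool) (F : S → ℕ → S) (s0 : S)
    (n₁ n₂ : ℕ) (hn₁ : b < n₁ - 1) (hn₂ : b < n₂ - 1)
    (C₁ : ℕ → Fin n₁ → S) (C₂ : ℕ → Fin n₂ → S)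
    (hinit₁ : ∀ i, C₁ 0 i = s0) (hinit₂ : ∀ i, C₂ 0 i = s0)
    (hstep₁ : ∀ r i, C₁ (r + 1) i =
      F (C₁ r i) (min b (((Finset.univ.erase i).filter
        (fun j => sendsP (C₁ r j) = true)).card)))
    (hstep₂ : ∀ r i, C₂ (r + 1) i =
      F (C₂ r i) (min b (((Finset.univ.erase i).filter
        (fun j => sendsP (C₂ r j) = true)).card))) :
    ∀ (T : ℕ) (i : Fin n₁) (j : Fin n₂), C₁ T i = C₂ T j := by
  have key : ∀ T, ∃ s : S, (∀ i, C₁ T i = s) ∧ (∀ j, C₂ T j = s) := by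
    intro T
    induction T with
    | zero => exact ⟨s0, hinit₁, hinit₂⟩
    | succ r ih =>
      obtain ⟨s, h1, h2⟩ := ih
      refine ⟨F s (min b (if sendsP s then b else 0)), ?_, ?_⟩
      · intro i
        rw [hstep₁ r i, h1 i]
        congr 1
        have : ((Finset.univ.erase i).filter fun j => sendsP (C₁ r j) = true)
            = if sendsP s then Finset.univ.erase i else ∅ := by
          split_ifs with hs
          · apply Finset.filter_true_of_mem; intro j _; rw [h1 j, hs]
          · apply Finset.filter_false_of_mem; intro j _
            simp [h1 j, hs]
        rw [this]
        split_ifs with hs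
        · rw [Finset.card_erase_of_mem (Finset.mem_univ i), Finset.card_univ,
            Fintype.card_fin]
          rw [min_eq_left hn₁.le, min_eq_left (le_refl b)]
        · simp
      · intro j
        rw [hstep₂ r j, h2 j]
        congr 1
        have : ((Finset.univ.erase j).filter fun k => sendsP (C₂ r k) = true)
            = if sendsP s then Finset.univ.erase j else ∅ := by
          split_ifs with hs
          · apply Finset.filter_true_of_mem; intro k _; rw [h2 k, hs]
          · apply Finset.filter_false_of_mem; intro k _
            simp [h2 k, hs]
        rw [this]
        split_ifs with hs
        · rw [Finset.card_erase_of_mem (Finset.mem_univ j), Finset.card_univ,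
            Fintype.card_fin]
          rw [min_eq_left hn₂.le, min_eq_left (le_refl b)]
        · simp
  intro T i j
  obtain ⟨s, h1, h2⟩ := key T
  rw [h1 i, h2 j]
end

section
/- Suppose a randomized algorithm (a cell definition) solves a decision task with error probability $0$, i.e., every execution in the support of its randomness produces the correct output. Define the 'maximized' deterministic algorithm obtained by replacing every firing probability in $(0,1]$ by $1$. Then every execution of the maximized deterministic algorithm coincides with some zero-probability-excluded execution of the randomized algorithm; in particular, if the randomized algorithm is always correct, so is the maximized deterministic algorithm. -/
/-- Zero-error derandomization.  A randomized cell fires its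
event with probability `f s ∈ [0,1]` at state `s` and transitions via `step`.
An execution is a choice sequence `c : ℕ → Bool` that is *possible* (has
nonzero probability) if it fires only when `f > 0` and stays silent only when
`f < 1`.  The 'maximized' deterministic algorithm `d` fires exactly when
`f > 0`.  Then `d` is itself a possible execution of the randomized algorithm;
in particular, if every possible execution is correct, then the maximized
deterministic execution is correct. -/
theorem maximized_deterministic_correct {S : Type*}
    (f : S → ℝ) (hf : ∀ s, 0 ≤ f s ∧ f s ≤ 1)
    (step : S → Bool → S) (s0 : S)
    (run : (ℕ → Bool) → ℕ → S)
    (hrun0 : ∀ c, run c 0 = s0)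
    (hrunS : ∀ c r, run c (r + 1) = step (run c r) (c r))
    (correct : (ℕ → S) → Prop)
    (hzero_error : ∀ c : ℕ → Bool,
      (∀ r, (c r = true → 0 < f (run c r)) ∧ (c r = false → f (run c r) < 1)) →
      correct (run c))
    (d : ℕ → Bool) (hd : ∀ r, d r = decide (0 < f (run d r))) :
    (∀ r, (d r = true → 0 < f (run d r)) ∧ (d r = false → f (run d r) < 1)) ∧
    correct (run d) := by
  have key : ∀ r, (d r = true → 0 < f (run d r)) ∧ (d r = false → f (run d r) < 1) := by
    intro r
    constructor
    · intro h
      have := hd r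
      rw [h] at this
      exact of_decide_eq_true this.symm
    · intro h
      have := hd r
      rw [h] at this
      have hnot : ¬ 0 < f (run d r) := of_decide_eq_false this.symm
      have := (hf (run d r)).1
      have : f (run d r) = 0 := le_antisymm (not_lt.mp hnot) this
      linarith
  exact ⟨key, hzero_error d key⟩
end

section
/- No single cell in the CBM can output the infinite repeating pattern ABCABC... with probability 1. Formally: let a cell have finitely many 'events', each event $e$ having a monotone (nondecreasing or nonincreasing) firing function $f_e : \mathbb{R} \to [0,1]$ of the cell's current potential. If three distinct symbols A, B, C are each emitted exactly when its corresponding event fires, then there exist two symbols $S_1 \neq S_2$ among $\{A,B,C\}$ and such that at every potential where $S_1$ fires with positive probability, $S_2$ also fires with positive probability. Consequently the output sequence equals ABCABC... with probability strictly less than 1. -/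
open Fin.NatCast

/-! Among three firing functions, each monotone or antitone, two share a direction
(pigeonhole). The positivity regions `{x | 0 < f x}` of two nondecreasing functions are
upper sets of `ℝ`, those of two nonincreasing ones lower sets, and in a linear order any
two upper (or lower) sets are nested. So one symbol fires with positive probability
wherever another one does, and the round in which the latter must fire surely is one in
which the former cannot be silent. -/

theorem IsUpperSet.isLowerSet_preimage_of_antitone {α β : Type*} [Preorder α] [Preorder β]
    {s : Set β} (hs : IsUpperSet s) {f : α → β} (hf : Antitone f) :
    IsLowerSet (f ⁻¹' s) :=
  fun _ _ hba ha => hs (hf hba) ha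

section

variable {ι α β : Type*} [LinearOrder α] [Preorder β] {s : Set β} {F : ι → α → β}

theorem exists_ne_monotone_and_monotone_or_antitone_and_antitone [Fintype ι]
    (hι : 2 < Fintype.card ι) (hF : ∀ i, Monotone (F i) ∨ Antitone (F i)) :
    ∃ i j, i ≠ j ∧
      (Monotone (F i) ∧ Monotone (F j) ∨ Antitone (F i) ∧ Antitone (F j)) := by
  classical
  obtain ⟨i, j, hij, hdir⟩ :=
    Fintype.exists_ne_map_eq_of_card_lt (fun i => decide (Monotone (F i))) (by simpa using hι)
  refine ⟨i, j, hij, ?_⟩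
  by_cases hi : Monotone (F i)
  · have hj : Monotone (F j) := by simpa [hi] using hdir
    exact .inl ⟨hi, hj⟩
  · have hj : ¬ Monotone (F j) := by simpa [hi] using hdir
    exact .inr ⟨(hF i).resolve_left hi, (hF j).resolve_left hj⟩

theorem preimage_subset_total_of_monotone_or_antitone (hs : IsUpperSet s) {i j : ι}
    (h : Monotone (F i) ∧ Monotone (F j) ∨ Antitone (F i) ∧ Antitone (F j)) :
    F i ⁻¹' s ⊆ F j ⁻¹' s ∨ F j ⁻¹' s ⊆ F i ⁻¹' s := by
  rcases h with ⟨hi, hj⟩ | ⟨hi, hj⟩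
  · exact (hs.preimage hi).total (hs.preimage hj)
  · exact (hs.isLowerSet_preimage_of_antitone hi).total (hs.isLowerSet_preimage_of_antitone hj)

theorem exists_ne_preimage_subset_of_monotone_or_antitone [Fintype ι]
    (hs : IsUpperSet s) (hι : 2 < Fintype.card ι)
    (hF : ∀ i, Monotone (F i) ∨ Antitone (F i)) :
    ∃ i j, i ≠ j ∧ F i ⁻¹' s ⊆ F j ⁻¹' s := by
  obtain ⟨i, j, hij, hdir⟩ := exists_ne_monotone_and_monotone_or_antitone_and_antitone hι hF
  rcases preimage_subset_total_of_monotone_or_antitone hs hdir with hsub | hsub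
  · exact ⟨i, j, hij, hsub⟩
  · exact ⟨j, i, hij.symm, hsub⟩

end

theorem no_repeating_pattern_general (F : Fin 3 → ℝ → ℝ)
    (hmono : ∀ i, Monotone (F i) ∨ Antitone (F i)) :
    (∃ i j : Fin 3, i ≠ j ∧ ∀ x : ℝ, 0 < F i x → 0 < F j x) ∧
    ¬ ∃ x : ℕ → ℝ, ∀ r : ℕ,
        F ((r : ℕ) : Fin 3) (x r) = 1 ∧
        ∀ i : Fin 3, i ≠ ((r : ℕ) : Fin 3) → F i (x r) = 0 := by
  obtain ⟨i, j, hij, hsub⟩ :=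
    exists_ne_preimage_subset_of_monotone_or_antitone (isUpperSet_Ioi (0 : ℝ)) (by simp) hmono
  refine ⟨⟨i, j, hij, hsub⟩, ?_⟩
  rintro ⟨x, hx⟩
  obtain ⟨hi_fires, hothers_silent⟩ := hx i.val
  rw [Fin.cast_val_eq_self] at hi_fires hothers_silent
  have hj_pos : 0 < F j (x i.val) := hsub (show 0 < F i (x i.val) by simp [hi_fires])
  exact hj_pos.ne' (hothers_silent j hij.symm)

/-- A single CBM cell cannot output the repeating pattern
ABCABC… with probability 1.  Each of the three symbols is emitted by an event
with a monotone (nondecreasing or nonincreasing) firing function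
`F i : ℝ → [0,1]` of the cell's potential.  Then two distinct symbols have
nested positive-probability regions: whenever one fires with positive
probability so does the other.  Consequently there is no potential trajectory
along which, in every round `r`, symbol `r mod 3` fires with probability 1
while the other two fire with probability 0. -/
theorem no_repeating_pattern (F : Fin 3 → ℝ → ℝ)
    (hrange : ∀ i x, 0 ≤ F i x ∧ F i x ≤ 1)
    (hmono : ∀ i, Monotone (F i) ∨ Antitone (F i)) :
    (∃ i j : Fin 3, i ≠ j ∧ ∀ x : ℝ, 0 < F i x → 0 < F j x) ∧
    ¬ ∃ x : ℕ → ℝ, ∀ r : ℕ,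
        F ((r : ℕ) : Fin 3) (x r) = 1 ∧
        ∀ i : Fin 3, i ≠ ((r : ℕ) : Fin 3) → F i (x r) = 0 :=
  no_repeating_pattern_general F hmono
end
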